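/- arXiv:2008.12174 — 4 statements merged into one kernel-verified Lean document; each statement's English description precedes it below -/
import Mathlib

section
/- Let (F ⊣ G) be an adjunction. Then F is a separable functor if and only if the unit η : 𝟭 C ⟶ F ⋙ G is a split monomorphism, i.e. there exists a natural transformation ψ : F ⋙ G ⟶ 𝟭 C with ψ ∘ η = 𝟙. -/
open CategoryTheory

/-- A functor `F` is *separable* if there are maps
`φ : Hom(F M, F N) → Hom(M, N)` such that `φ (F θ) = θ` and `φ` sends commuting squares
to commuting squares. -/
def CategoryTheory.Functor.Separable {C D : Type*} [Category C] [Category D]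
    (F : C ⥤ D) : Prop :=
  ∃ φ : ∀ M N : C, (F.obj M ⟶ F.obj N) → (M ⟶ N),
    (∀ (M N : C) (θ : M ⟶ N), φ M N (F.map θ) = θ) ∧
    (∀ (M N M' N' : C) (α : M ⟶ M') (β : N ⟶ N')
        (f : F.obj M ⟶ F.obj N) (g : F.obj M' ⟶ F.obj N'),
      f ≫ F.map β = F.map α ≫ g → φ M N f ≫ β = α ≫ φ M' N' g)

/-- (Rafael) For an adjunction `F ⊣ G`, the functor `F` is separable iff the unit
`η : 𝟭 C ⟶ F ⋙ G` is a split monomorphism of natural transformations. -/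
theorem separable_iff_unit_split_mono {C D : Type*} [Category C] [Category D]
    (F : C ⥤ D) (G : D ⥤ C) (adj : F ⊣ G) :
    F.Separable ↔ ∃ ψ : F ⋙ G ⟶ 𝟭 C, adj.unit ≫ ψ = 𝟙 (𝟭 C) := by
  constructor
  · rintro ⟨φ, hφ1, hφ2⟩
    refine ⟨⟨fun M => φ _ _ (adj.counit.app (F.obj M)), ?_⟩, ?_⟩
    · intro M N θ
      exact (hφ2 _ _ _ _ ((F ⋙ G).map θ) θ _ _
        (by simpa only [Functor.comp_map, Functor.id_map] using (adj.counit.naturality (F.map θ)).symm)).symm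
    · ext M
      simp only [NatTrans.comp_app, NatTrans.id_app, Functor.id_obj]
      have := hφ2 M M (G.obj (F.obj M)) M (adj.unit.app M) (𝟙 M)
        (F.map (𝟙 M)) (adj.counit.app (F.obj M)) (by simp)
      rw [Category.comp_id, hφ1] at this
      exact this.symm
  · rintro ⟨ψ, hψ⟩
    refine ⟨fun M N f => adj.unit.app M ≫ G.map f ≫ ψ.app N, ?_, ?_⟩
    · intro M N θ
      show adj.unit.app M ≫ G.map (F.map θ) ≫ ψ.app N = θ
      have h1 : adj.unit.app M ≫ G.map (F.map θ) = θ ≫ adj.unit.app N :=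
        (adj.unit.naturality θ).symm
      have h2 : adj.unit.app N ≫ ψ.app N = 𝟙 N := congrArg (fun t => t.app N) hψ
      rw [← Category.assoc, h1, Category.assoc, h2, Category.comp_id]
    · intro M N M' N' α β f g hcomm
      have hψn : ψ.app N ≫ β = G.map (F.map β) ≫ ψ.app N' := (ψ.naturality β).symm
      have h1 : adj.unit.app M ≫ G.map (F.map α) = α ≫ adj.unit.app M' :=
        (adj.unit.naturality α).symm
      show (adj.unit.app M ≫ G.map f ≫ ψ.app N) ≫ β = α ≫ adj.unit.app M' ≫ G.map g ≫ ψ.app N'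
      calc (adj.unit.app M ≫ G.map f ≫ ψ.app N) ≫ β
          = adj.unit.app M ≫ G.map f ≫ G.map (F.map β) ≫ ψ.app N' := by
            simp only [Category.assoc, hψn]
        _ = adj.unit.app M ≫ G.map (F.map α) ≫ G.map g ≫ ψ.app N' := by
            rw [← Category.assoc (G.map f), ← G.map_comp, hcomm, G.map_comp, Category.assoc]
        _ = α ≫ adj.unit.app M' ≫ G.map g ≫ ψ.app N' := by
            rw [← Category.assoc, h1, Category.assoc]
end

section
/- Let (F ⊣ G) be an adjunction. Then G is a separable functor if and only if the counit ε : G ⋙ F ⟶ 𝟭 D is a split epimorphism, i.e. there exists a natural transformation ξ : 𝟭 D ⟶ G ⋙ F with ε ∘ ξ = 𝟙. -/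
open CategoryTheory

/-- (Rafael) For an adjunction `F ⊣ G`, the functor `G` is separable iff the counit
`ε : G ⋙ F ⟶ 𝟭 D` is a split epimorphism of natural transformations. -/
theorem separable_iff_counit_split_epi {C D : Type*} [Category C] [Category D]
    (F : C ⥤ D) (G : D ⥤ C) (adj : F ⊣ G) :
    G.Separable ↔ ∃ ξ : 𝟭 D ⟶ G ⋙ F, ξ ≫ adj.counit = 𝟙 (𝟭 D) := by
  constructor
  · rintro ⟨φ, hφ1, hφ2⟩
    refine ⟨⟨fun M => φ M (F.obj (G.obj M)) (adj.unit.app (G.obj M)), ?_⟩, ?_⟩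
    · intro M N u
      simpa using hφ2 M (F.obj (G.obj M)) N (F.obj (G.obj N)) u (F.map (G.map u))
        (adj.unit.app (G.obj M)) (adj.unit.app (G.obj N))
        (adj.unit.naturality (G.map u)).symm |>.symm
    · ext M
      have := hφ2 M (F.obj (G.obj M)) M M (𝟙 M) (adj.counit.app M)
        (adj.unit.app (G.obj M)) (G.map (𝟙 M)) ?_
      · have h1 : φ M M (𝟙 (G.obj M)) = 𝟙 M := by
          simpa using hφ1 M M (𝟙 M)
        simpa [h1] using this
      · simp [adj.right_triangle_components M]
  · rintro ⟨ξ, hξ⟩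
    have hξ' : ∀ M : D, ξ.app M ≫ adj.counit.app M = 𝟙 M := by
      intro M
      have := congrArg (fun t => t.app M) hξ
      simpa using this
    refine ⟨fun M N f => ξ.app M ≫ F.map f ≫ adj.counit.app N, ?_, ?_⟩
    · intro M N θ
      have := ξ.naturality θ
      simp only [Functor.id_map, Functor.comp_map] at this
      dsimp only
      rw [← Category.assoc, ← this, Category.assoc, hξ']
      simp
    · intro M N M' N' α β f g h
      have hnat : adj.counit.app N ≫ β = F.map (G.map β) ≫ adj.counit.app N' := by
        simpa using (adj.counit.naturality β).symm
      have hξnat : ξ.app M ≫ F.map (G.map α) = α ≫ ξ.app M' := by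
        have := ξ.naturality α
        simpa using this.symm
      calc (ξ.app M ≫ F.map f ≫ adj.counit.app N) ≫ β
          = ξ.app M ≫ F.map f ≫ F.map (G.map β) ≫ adj.counit.app N' := by
            rw [Category.assoc, Category.assoc, hnat]
        _ = ξ.app M ≫ F.map (G.map α) ≫ F.map g ≫ adj.counit.app N' := by
            rw [← Category.assoc (F.map f), ← F.map_comp, h, F.map_comp, Category.assoc]
        _ = α ≫ ξ.app M' ≫ F.map g ≫ adj.counit.app N' := by
            rw [← Category.assoc, hξnat, Category.assoc]
end

section
/- Let (F, G) be a Frobenius pair between abelian categories with enough projectives. If X is a Gorenstein projective object of C, then F(X) is a Gorenstein projective object of D. -/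
/-!
A left-and-right adjoint `F` is exact, so it carries the complete resolution `P` of `X` to an
acyclic complex `F P` of projectives whose cycles in degree `0` are `F X`. By adjunction,
`Hom(F P, Q)` is `Hom(P, G Q)`, which is acyclic because `G Q` is projective: `G` has the
epimorphism-preserving right adjoint `F`.
-/

open CategoryTheory Limits

/-- An object `M` of an abelian category is *Gorenstein projective* if it is a syzygy
(the kernel `ker(P⁰ → P¹)`) of an acyclic complex `P` of projective objects such that
`Hom(P, Q)` is acyclic for every projective `Q`. -/
def IsGorensteinProjective {A : Type*} [Category A] [Abelian A] (M : A) : Prop :=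
  ∃ P : CochainComplex A ℤ,
    (∀ n : ℤ, Projective (P.X n)) ∧
    (∀ n : ℤ, P.ExactAt n) ∧
    Nonempty (M ≅ P.cycles 0) ∧
    ∀ (Q : A), Projective Q → ∀ (n : ℤ) (f : P.X n ⟶ Q), P.d (n - 1) n ≫ f = 0 →
      ∃ g : P.X (n + 1) ⟶ Q, P.d n (n + 1) ≫ g = f

/-- `φ : X ⟶ M` is an `𝒳`-precover of `M` if `X ∈ 𝒳` and every morphism from an object
of `𝒳` to `M` factors through `φ`. -/
def IsPrecover {A : Type*} [Category A] (𝒳 : A → Prop) {X M : A} (φ : X ⟶ M) : Prop :=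
  𝒳 X ∧ ∀ (X' : A), 𝒳 X' → ∀ f : X' ⟶ M, ∃ g : X' ⟶ X, g ≫ φ = f

namespace CochainComplex

variable {A : Type*} [Category A] [HasZeroMorphisms A]

def HomAcyclic (P : CochainComplex A ℤ) (Q : A) : Prop :=
  ∀ (n : ℤ) (f : P.X n ⟶ Q), P.d (n - 1) n ≫ f = 0 →
    ∃ g : P.X (n + 1) ⟶ Q, P.d n (n + 1) ≫ g = f

end CochainComplex

namespace CategoryTheory.Adjunction

variable {C D : Type*} [Category C] [Category D] {F : C ⥤ D} {G : D ⥤ C}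

theorem map_comp_eq_iff (adj : F ⊣ G) {U V : C} {Q : D} (u : U ⟶ V) (g : F.obj V ⟶ Q)
    (f : F.obj U ⟶ Q) : F.map u ≫ g = f ↔ u ≫ adj.homEquiv _ _ g = adj.homEquiv _ _ f := by
  rw [← adj.homEquiv_naturality_left, (adj.homEquiv _ _).apply_eq_iff_eq]

variable [HasZeroMorphisms C] [HasZeroMorphisms D]

theorem map_comp_eq_zero_iff (adj : F ⊣ G) {U V : C} {Q : D} (u : U ⟶ V) (f : F.obj V ⟶ Q) :
    F.map u ≫ f = 0 ↔ u ≫ adj.homEquiv _ _ f = 0 := by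
  have : G.IsRightAdjoint := adj.isRightAdjoint
  rw [adj.map_comp_eq_iff u f 0, adj.homEquiv_unit _ _ 0, Functor.map_zero, comp_zero]

theorem homAcyclic_mapHomologicalComplex_iff [F.PreservesZeroMorphisms] (adj : F ⊣ G)
    (P : CochainComplex C ℤ) (Q : D) :
    CochainComplex.HomAcyclic ((F.mapHomologicalComplex _).obj P) Q ↔
      CochainComplex.HomAcyclic P (G.obj Q) :=
  forall_congr' fun _ => (adj.homEquiv _ _).forall_congr fun f =>
    imp_congr (adj.map_comp_eq_zero_iff _ f)
      ((adj.homEquiv _ _).exists_congr fun g => adj.map_comp_eq_iff _ g f)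

end CategoryTheory.Adjunction

theorem IsGorensteinProjective.map {C D : Type*} [Category C] [Category D]
    [Abelian C] [Abelian D] {F : C ⥤ D} {G : D ⥤ C} [F.PreservesZeroMorphisms]
    [F.PreservesHomology] [F.PreservesProjectiveObjects] [G.PreservesProjectiveObjects]
    (adj : F ⊣ G) {X : C} (hX : IsGorensteinProjective X) : IsGorensteinProjective (F.obj X) := by
  obtain ⟨P, hproj, hexact, ⟨e⟩, hacyclic⟩ := hX
  refine ⟨(F.mapHomologicalComplex _).obj P, fun n => F.projective_obj_of_projective (hproj n),
    fun n => (hexact n).map F, ⟨F.mapIso e ≪≫ ((P.sc 0).mapCyclesIso F).symm⟩,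
    fun Q hQ => ?_⟩
  exact (adj.homAcyclic_mapHomologicalComplex_iff P Q).2
    (hacyclic _ (G.projective_obj_of_projective hQ))

theorem frobenius_pair_map_gorensteinProjective_general {C D : Type*} [Category C] [Category D]
    [Abelian C] [Abelian D]
    (F : C ⥤ D) (G : D ⥤ C)
    (adj₁ : F ⊣ G) (adj₂ : G ⊣ F) (X : C) (hX : IsGorensteinProjective X) :
    IsGorensteinProjective (F.obj X) := by
  have : F.IsLeftAdjoint := adj₁.isLeftAdjoint
  have : F.IsRightAdjoint := adj₂.isRightAdjoint
  have : G.IsLeftAdjoint := adj₂.isLeftAdjoint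
  have := Functor.preservesProjectiveObjects_of_adjunction_of_preservesEpimorphisms adj₁
  have := Functor.preservesProjectiveObjects_of_adjunction_of_preservesEpimorphisms adj₂
  exact hX.map adj₁

/-- If `(F, G)` is a Frobenius pair between abelian categories with enough projectives
and `X` is Gorenstein projective in `C`, then `F X` is Gorenstein projective in `D`. -/
theorem frobenius_pair_map_gorensteinProjective {C D : Type*} [Category C] [Category D]
    [Abelian C] [Abelian D] [EnoughProjectives C] [EnoughProjectives D]
    (F : C ⥤ D) (G : D ⥤ C) [F.Additive] [G.Additive]
    (adj₁ : F ⊣ G) (adj₂ : G ⊣ F) (X : C) (hX : IsGorensteinProjective X) :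
    IsGorensteinProjective (F.obj X) :=
  frobenius_pair_map_gorensteinProjective_general F G adj₁ adj₂ X hX
end

section
/- Let (F, G) be a Frobenius pair between abelian categories with enough projectives. If every object of C has a Gorenstein projective precover, then every object of D has an F(GP(C))-precover, where F(GP(C)) is the class of objects of the form F(X) with X Gorenstein projective in C. Concretely, for N in D, if f : X ⟶ G(N) is a Gorenstein projective precover, then ε_N ∘ F(f) : F(X) ⟶ N is an F(GP(C))-precover of N. -/
open CategoryTheory Limits

/-- If `(F, G)` is a Frobenius pair between abelian categories with enough projectives
and every object of `C` has a Gorenstein projective precover, then every object of `D`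
has an `F(𝒢𝒫(C))`-precover; concretely, if `f : X ⟶ G N` is a Gorenstein projective
precover then `F f ≫ ε_N : F X ⟶ N` is an `F(𝒢𝒫(C))`-precover of `N`. -/
theorem frobenius_pair_FGP_precovering {C D : Type*} [Category C] [Category D]
    [Abelian C] [Abelian D] [EnoughProjectives C] [EnoughProjectives D]
    (F : C ⥤ D) (G : D ⥤ C) [F.Additive] [G.Additive]
    (adj₁ : F ⊣ G) (adj₂ : G ⊣ F)
    (hC : ∀ M : C, ∃ (X : C) (φ : X ⟶ M), IsPrecover (IsGorensteinProjective (A := C)) φ) :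
    (∀ N : D, ∃ (Y : D) (φ : Y ⟶ N),
      IsPrecover (fun Y' => ∃ X : C, IsGorensteinProjective X ∧ Nonempty (Y' ≅ F.obj X)) φ) ∧
    (∀ (N : D) (X : C) (f : X ⟶ G.obj N),
      IsPrecover (IsGorensteinProjective (A := C)) f →
      IsPrecover (fun Y' => ∃ X' : C, IsGorensteinProjective X' ∧ Nonempty (Y' ≅ F.obj X'))
        (F.map f ≫ adj₁.counit.app N)) := by
  have key : ∀ (N : D) (X : C) (f : X ⟶ G.obj N),
      IsPrecover (IsGorensteinProjective (A := C)) f →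
      IsPrecover (fun Y' => ∃ X' : C, IsGorensteinProjective X' ∧ Nonempty (Y' ≅ F.obj X'))
        (F.map f ≫ adj₁.counit.app N) := by
    intro N X f hf
    refine ⟨⟨X, hf.1, ⟨Iso.refl _⟩⟩, ?_⟩
    rintro Y' ⟨X', hX', ⟨e⟩⟩ h
    obtain ⟨g, hg⟩ := hf.2 X' hX' ((adj₁.homEquiv X' N) (e.inv ≫ h))
    refine ⟨e.hom ≫ F.map g, ?_⟩
    have : F.map g ≫ F.map f ≫ adj₁.counit.app N = e.inv ≫ h := by
      rw [← Category.assoc, ← F.map_comp, hg]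
      have h2 := (adj₁.homEquiv X' N).symm_apply_apply (e.inv ≫ h)
      rwa [adj₁.homEquiv_counit] at h2
    rw [Category.assoc, this, ← Category.assoc, e.hom_inv_id, Category.id_comp]
  refine ⟨fun N => ?_, key⟩
  obtain ⟨X, φ, hφ⟩ := hC (G.obj N)
  exact ⟨F.obj X, F.map φ ≫ adj₁.counit.app N, key N X φ hφ⟩
end
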